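/- A property Φ : Σ^ω → D is safe if and only if it is an inf-property, i.e., there exists a finitary property π : Σ* → D such that Φ(f) = inf_{s ≺ f} π(s) for all f ∈ Σ^ω. -/
import Mathlib


open Classical

variable {A : Type*}

/-- Concatenation of a finite word with an infinite word. -/
noncomputable def ext (s : List A) (g : ℕ → A) : ℕ → A :=
  fun n => if h : n < s.length then s.get ⟨n, h⟩ else g (n - s.length)

/-- The length-`n` prefix of an infinite word. -/
noncomputable def pref (f : ℕ → A) (n : ℕ) : List A := List.ofFn (fun i : Fin n => f i)

/-- The safety closure of a property. -/
noncomputable def sclo {D : Type*} [CompleteLattice D] (Φ : (ℕ → A) → D) : (ℕ → A) → D :=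
  fun f => ⨅ n : ℕ, ⨆ g : ℕ → A, Φ (ext (pref f n) g)

/-- A quantitative property is safe. -/
def Safe {D : Type*} [CompleteLattice D] (Φ : (ℕ → A) → D) : Prop :=
  ∀ f : ℕ → A, ∀ v : D, ¬ v ≤ Φ f → ∃ n : ℕ, ¬ v ≤ ⨆ g : ℕ → A, Φ (ext (pref f n) g)

/-- A quantitative property is live. -/
def Live {D : Type*} [CompleteLattice D] (Φ : (ℕ → A) → D) : Prop :=
  ∀ f : ℕ → A, Φ f < ⊤ → ∃ v : D, ¬ v ≤ Φ f ∧ ∀ n : ℕ, v ≤ ⨆ g : ℕ → A, Φ (ext (pref f n) g)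


lemma ext_pref_eq (f : ℕ → A) (n : ℕ) : ext (pref f n) (fun k => f (k + n)) = f := by
  funext m
  simp only [ext, pref, List.length_ofFn]
  split_ifs with h
  · simp
  · congr 1; omega

lemma pref_ext_eq (f : ℕ → A) (n : ℕ) (g : ℕ → A) :
    pref (ext (pref f n) g) n = pref f n := by
  simp only [pref]
  congr 1
  funext i
  simp [ext, pref, i.isLt]

theorem safe_iff_inf_property {D : Type*} [CompleteLattice D] [Fintype A] [Nonempty A]
    (Φ : (ℕ → A) → D) :
    Safe Φ ↔ ∃ π : List A → D, ∀ f : ℕ → A, Φ f = ⨅ n : ℕ, π (pref f n) := by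
  constructor
  · intro hs
    refine ⟨fun s => ⨆ g : ℕ → A, Φ (ext s g), fun f => ?_⟩
    apply le_antisymm
    · exact le_iInf fun n => le_iSup_of_le (fun k => f (k + n)) (by rw [ext_pref_eq])
    · by_contra h
      obtain ⟨n, hn⟩ := hs f _ h
      exact hn (iInf_le _ n)
  · rintro ⟨π, hπ⟩ f v hv
    rw [hπ] at hv
    have : ∃ n, ¬ v ≤ π (pref f n) := by
      by_contra h
      push_neg at h
      exact hv (le_iInf h)
    obtain ⟨n, hn⟩ := this
    refine ⟨n, fun hle => hn ?_⟩
    refine hle.trans (iSup_le fun g => ?_)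
    rw [hπ]
    exact (iInf_le _ n).trans (by rw [pref_ext_eq])
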